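/- arXiv:1401.4754 — 5 statements merged into one kernel-verified Lean document; each statement's English description precedes it below -/
import Mathlib

section
/- Let H₁ and H₂ be real Hilbert spaces and H = H₁ × H₂ with the product inner product. Let T : H → H be a bounded self-adjoint linear operator, b ∈ H, c ∈ ℝ, and define the quadratic functional J(u) = (1/2)⟨Tu, u⟩ + ⟨b, u⟩ + c. Then a pair u* = (u₁*, u₂*) ∈ H is a saddle point of J, i.e. J(u₁*, u₂) ≤ J(u₁*, u₂*) ≤ J(u₁, u₂*) for all u₁ ∈ H₁ and u₂ ∈ H₂, if and only if the following three conditions hold: (a) Tu* + b = 0 (stationarity); (b) ⟨T(v, 0), (v, 0)⟩ ≥ 0 for all v ∈ H₁ (convexity in the first variable); (c) ⟨T(0, w), (0, w)⟩ ≤ 0 for all w ∈ H₂ (concavity in the second variable). -/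
open scoped RealInnerProductSpace

/-!
For symmetric `T`, `J (u + h) = J u + ⟪T u + b, h⟫ + ½ ⟪T h, h⟫`. Along each line through `u`
this is a real quadratic in the line parameter, which is minimal (resp. maximal) at `u` exactly
when its linear coefficient vanishes and its leading coefficient is `≥ 0` (resp. `≤ 0`). Doing this
along `H₁ × 0` and along `0 × H₂` gives (b), (c) and the orthogonality of `T u + b` to both
factors, i.e. (a).
-/

theorem eq_zero_of_forall_quadratic_nonneg {a β : ℝ} (h : ∀ t : ℝ, 0 ≤ a * (t * t) + β * t) :
    β = 0 := by
  have : discrim a β 0 ≤ 0 := discrim_le_zero (by simpa using h)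
  rw [discrim] at this
  nlinarith [sq_nonneg β]

section Quadratic

variable {E F : Type*} [NormedAddCommGroup E] [InnerProductSpace ℝ E] [AddCommGroup F] [Module ℝ F]

noncomputable def quadraticFun (T : E →ₗ[ℝ] E) (b : E) (c : ℝ) (u : E) : ℝ :=
  1 / 2 * ⟪T u, u⟫ + ⟪b, u⟫ + c

variable {T : E →ₗ[ℝ] E} (b : E) (c : ℝ)

theorem quadraticFun_neg (u : E) : quadraticFun (-T) (-b) (-c) u = -quadraticFun T b c u := by
  simp only [quadraticFun, LinearMap.neg_apply, inner_neg_left]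
  ring

namespace LinearMap.IsSymmetric

theorem quadraticFun_add (hT : T.IsSymmetric) (u h : E) :
    quadraticFun T b c (u + h) = quadraticFun T b c u + ⟪T u + b, h⟫ + 1 / 2 * ⟪T h, h⟫ := by
  have : ⟪T h, u⟫ = ⟪T u, h⟫ := by rw [hT, real_inner_comm]
  simp only [quadraticFun, map_add, inner_add_left, inner_add_right, this]
  ring

theorem forall_quadraticFun_le_add_iff (hT : T.IsSymmetric) (L : F →ₗ[ℝ] E) (u : E) :
    (∀ v, quadraticFun T b c u ≤ quadraticFun T b c (u + L v)) ↔
      (∀ v, ⟪T u + b, L v⟫ = 0) ∧ ∀ v, 0 ≤ ⟪T (L v), L v⟫ := by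
  simp only [hT.quadraticFun_add, add_assoc, le_add_iff_nonneg_right]
  refine ⟨fun h => ?_, fun ⟨hg, hq⟩ v => by rw [hg, zero_add]; have := hq v; positivity⟩
  have hg : ∀ v, ⟪T u + b, L v⟫ = 0 := fun v =>
    eq_zero_of_forall_quadratic_nonneg (a := 1 / 2 * ⟪T (L v), L v⟫) fun t => by
      have := h (t • v)
      simp only [map_smul, inner_smul_left, inner_smul_right, RCLike.conj_to_real] at this
      linarith
  exact ⟨hg, fun v => by have := h v; rw [hg, zero_add] at this; linarith⟩

theorem forall_quadraticFun_add_le_iff (hT : T.IsSymmetric) (L : F →ₗ[ℝ] E) (u : E) :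
    (∀ v, quadraticFun T b c (u + L v) ≤ quadraticFun T b c u) ↔
      (∀ v, ⟪T u + b, L v⟫ = 0) ∧ ∀ v, ⟪T (L v), L v⟫ ≤ 0 := by
  have hT' : (-T).IsSymmetric := fun x y => by
    simp only [LinearMap.neg_apply, inner_neg_left, inner_neg_right, hT x y]
  simpa only [quadraticFun_neg, neg_le_neg_iff, LinearMap.neg_apply, ← neg_add, inner_neg_left,
    neg_eq_zero, neg_nonneg] using hT'.forall_quadraticFun_le_add_iff (-b) (-c) L u

end LinearMap.IsSymmetric

end Quadratic

theorem WithLp.prod_eq_zero_iff_inner_inl_inr {E F : Type*}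
    [NormedAddCommGroup E] [InnerProductSpace ℝ E] [NormedAddCommGroup F] [InnerProductSpace ℝ F]
    (g : WithLp 2 (E × F)) :
    g = 0 ↔ (∀ v, ⟪g, toLp 2 (v, (0 : F))⟫ = 0) ∧ ∀ w, ⟪g, toLp 2 ((0 : E), w)⟫ = 0 := by
  refine ⟨by rintro rfl; simp, fun ⟨h₁, h₂⟩ => ?_⟩
  have hg : g = toLp 2 (g.fst, 0) + toLp 2 (0, g.snd) := by
    rw [← toLp_add, Prod.mk_add_mk, add_zero, zero_add]; rfl
  rw [← inner_self_eq_zero (𝕜 := ℝ)]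
  nth_rw 2 [hg]
  rw [inner_add_right, h₁, h₂, add_zero]

theorem quadratic_saddle_point_iff_general
    {H₁ H₂ : Type*}
    [NormedAddCommGroup H₁] [InnerProductSpace ℝ H₁]
    [NormedAddCommGroup H₂] [InnerProductSpace ℝ H₂]
    (T : WithLp 2 (H₁ × H₂) →L[ℝ] WithLp 2 (H₁ × H₂))
    (hT : ∀ u v : WithLp 2 (H₁ × H₂), ⟪T u, v⟫ = ⟪u, T v⟫)
    (b : WithLp 2 (H₁ × H₂)) (c : ℝ) (J : WithLp 2 (H₁ × H₂) → ℝ)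
    (hJ : ∀ u, J u = (1 / 2) * ⟪T u, u⟫ + ⟪b, u⟫ + c)
    (u₁ : H₁) (u₂ : H₂) :
    (∀ (v₁ : H₁) (v₂ : H₂),
        J ((WithLp.equiv 2 (H₁ × H₂)).symm (u₁, v₂))
            ≤ J ((WithLp.equiv 2 (H₁ × H₂)).symm (u₁, u₂)) ∧
          J ((WithLp.equiv 2 (H₁ × H₂)).symm (u₁, u₂))
            ≤ J ((WithLp.equiv 2 (H₁ × H₂)).symm (v₁, u₂)))
      ↔ (T ((WithLp.equiv 2 (H₁ × H₂)).symm (u₁, u₂)) + b = 0 ∧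
          (∀ v : H₁, 0 ≤ ⟪T ((WithLp.equiv 2 (H₁ × H₂)).symm (v, 0)),
            (WithLp.equiv 2 (H₁ × H₂)).symm (v, 0)⟫) ∧
          (∀ w : H₂, ⟪T ((WithLp.equiv 2 (H₁ × H₂)).symm (0, w)),
            (WithLp.equiv 2 (H₁ × H₂)).symm (0, w)⟫ ≤ 0)) := by
  obtain rfl : J = quadraticFun T b c := funext hJ
  have hT : (T : WithLp 2 (H₁ × H₂) →ₗ[ℝ] WithLp 2 (H₁ × H₂)).IsSymmetric := hT
  let e := (WithLp.linearEquiv 2 ℝ (H₁ × H₂)).symm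
  let L₁ := e.toLinearMap ∘ₗ LinearMap.inl ℝ H₁ H₂
  let L₂ := e.toLinearMap ∘ₗ LinearMap.inr ℝ H₁ H₂
  set u := (WithLp.equiv 2 (H₁ × H₂)).symm (u₁, u₂)
  have hmin : (∀ v₁, quadraticFun T b c u ≤ quadraticFun T b c ((WithLp.equiv 2 _).symm (v₁, u₂)))
      ↔ (∀ v, ⟪T u + b, L₁ v⟫ = 0) ∧ ∀ v, 0 ≤ ⟪T (L₁ v), L₁ v⟫ := by
    refine Iff.trans ?_ (hT.forall_quadraticFun_le_add_iff b c L₁ u)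
    rw [← (Equiv.addLeft u₁).forall_congr_right]
    simp [u, L₁, e, ← WithLp.toLp_add]
  have hmax : (∀ v₂, quadraticFun T b c ((WithLp.equiv 2 _).symm (u₁, v₂)) ≤ quadraticFun T b c u)
      ↔ (∀ w, ⟪T u + b, L₂ w⟫ = 0) ∧ ∀ w, ⟪T (L₂ w), L₂ w⟫ ≤ 0 := by
    refine Iff.trans ?_ (hT.forall_quadraticFun_add_le_iff b c L₂ u)
    rw [← (Equiv.addLeft u₂).forall_congr_right]
    simp [u, L₂, e, ← WithLp.toLp_add]
  rw [forall_comm]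
  simp only [forall_and, forall_const]
  rw [hmin, hmax, WithLp.prod_eq_zero_iff_inner_inl_inr]
  tauto

/-- Abstract Hilbert-space characterization of saddle points of a quadratic functional
`J(u) = (1/2)⟨Tu, u⟩ + ⟨b, u⟩ + c` on `H = H₁ × H₂` (with the product inner product),
`T` bounded self-adjoint: `(u₁, u₂)` is a saddle point iff `Tu* + b = 0`,
`⟨T(v,0), (v,0)⟩ ≥ 0` for all `v ∈ H₁`, and `⟨T(0,w), (0,w)⟩ ≤ 0` for all `w ∈ H₂`. -/
theorem quadratic_saddle_point_iff
    {H₁ H₂ : Type*}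
    [NormedAddCommGroup H₁] [InnerProductSpace ℝ H₁] [CompleteSpace H₁]
    [NormedAddCommGroup H₂] [InnerProductSpace ℝ H₂] [CompleteSpace H₂]
    (T : WithLp 2 (H₁ × H₂) →L[ℝ] WithLp 2 (H₁ × H₂))
    (hT : ∀ u v : WithLp 2 (H₁ × H₂), ⟪T u, v⟫ = ⟪u, T v⟫)
    (b : WithLp 2 (H₁ × H₂)) (c : ℝ) (J : WithLp 2 (H₁ × H₂) → ℝ)
    (hJ : ∀ u, J u = (1 / 2) * ⟪T u, u⟫ + ⟪b, u⟫ + c)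
    (u₁ : H₁) (u₂ : H₂) :
    (∀ (v₁ : H₁) (v₂ : H₂),
        J ((WithLp.equiv 2 (H₁ × H₂)).symm (u₁, v₂))
            ≤ J ((WithLp.equiv 2 (H₁ × H₂)).symm (u₁, u₂)) ∧
          J ((WithLp.equiv 2 (H₁ × H₂)).symm (u₁, u₂))
            ≤ J ((WithLp.equiv 2 (H₁ × H₂)).symm (v₁, u₂)))
      ↔ (T ((WithLp.equiv 2 (H₁ × H₂)).symm (u₁, u₂)) + b = 0 ∧
          (∀ v : H₁, 0 ≤ ⟪T ((WithLp.equiv 2 (H₁ × H₂)).symm (v, 0)),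
            (WithLp.equiv 2 (H₁ × H₂)).symm (v, 0)⟫) ∧
          (∀ w : H₂, ⟪T ((WithLp.equiv 2 (H₁ × H₂)).symm (0, w)),
            (WithLp.equiv 2 (H₁ × H₂)).symm (0, w)⟫ ≤ 0)) :=
  quadratic_saddle_point_iff_general T hT b c J hJ u₁ u₂
end

section
/- Let n, m ≥ 1 and 0 ≤ t < T. Let A ∈ L¹(t,T;ℝ^{n×n}), B ∈ L²(t,T;ℝ^{n×m}), C ∈ L²(t,T;ℝ^{n×n}), D ∈ L^∞(t,T;ℝ^{n×m}), Q ∈ L¹(t,T;𝕊ⁿ), S ∈ L²(t,T;ℝ^{m×n}), R ∈ L^∞(t,T;𝕊ᵐ), and G ∈ 𝕊ⁿ. Suppose P : [t,T] → ℝ^{n×n} is continuous and Θ ∈ L²(t,T;ℝ^{m×n}) are such that: P(s) = G + ∫ₛᵀ [P A + AᵀP + CᵀPC + (PB + CᵀPD + Sᵀ)Θ + Q] dr for all s ∈ [t,T], and BᵀP + DᵀPC + S + (R + DᵀPD)Θ = 0 for a.e. s ∈ [t,T]. Define M(s) = B(s)ᵀP(s) + D(s)ᵀP(s)C(s) + S(s)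 and R̂(s) = R(s) + D(s)ᵀP(s)D(s), and let R̂(s)† be the Moore–Penrose pseudoinverse of R̂(s). Then: (i) P(s)ᵀ = P(s) for all s ∈ [t,T]; (ii) the range condition R̂(s)R̂(s)†M(s) = M(s) holds for a.e. s ∈ [t,T]; (iii) P solves the Riccati integral equation P(s) = G + ∫ₛᵀ [PA + AᵀP + CᵀPC + Q − MᵀR̂†M] dr for all s ∈ [t,T]; and (iv) the function s ↦ R̂(s)†M(s) belongs to L²(t,T;ℝ^{m×n}). -/
/-!
Write `Ŝ = BᵀP + DᵀPC + S` (the `M` of the statement) and `R̂ = R + DᵀPD`. Under the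
stationarity constraint `Ŝ + R̂Θ = 0` the integrand of the linear equation equals
`ℒ(P) + W`, where `ℒ(X) = X(A + BΘ) + (A + BΘ)ᵀX + (C + DΘ)ᵀX(C + DΘ)` is the Lyapunov
operator of the closed-loop system and `W = Q + ΘᵀRΘ + SᵀΘ + ΘᵀS` is symmetric. As `ℒ`
commutes with transposition, `Δ = P - Pᵀ` solves the homogeneous Volterra equation
`Δ(s) = ∫ₛᵀ ℒ(Δ)`, and the norm of `ℒ` at time `r` is bounded by
`2n‖A + BΘ‖ + n²‖C + DΘ‖² ∈ L¹`; Gronwall's inequality gives `Δ = 0`.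

Once `P` is symmetric so is `R̂`, and `Ŝ = -R̂Θ` reduces the remaining claims to the Penrose
equations: `R̂R̂†Ŝ = -R̂R̂†R̂Θ = Ŝ`; `ŜᵀR̂†Ŝ = ΘᵀR̂Θ = -ŜᵀΘ`, which turns the linear equation
into the Riccati equation; and `R̂†Ŝ = -(R̂†R̂)Θ`, where `R̂†R̂` is an orthogonal projection, so
its entries are bounded by `1` and `R̂†Ŝ ∈ L²`.
-/

open Matrix MeasureTheory Set

attribute [local instance] Matrix.normedAddCommGroup Matrix.normedSpace

namespace Matrix

variable {l m n α : Type*} [Fintype l] [Fintype m] [Fintype n]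

theorem norm_mul_le_card_mul [NonUnitalNormedRing α] (A : Matrix l m α) (B : Matrix m n α) :
    ‖A * B‖ ≤ Fintype.card m * ‖A‖ * ‖B‖ := by
  rw [norm_le_iff (by positivity)]
  intro i k
  calc ‖(A * B) i k‖ ≤ ∑ j, ‖A i j * B j k‖ := norm_sum_le _ _
    _ ≤ ∑ _j : m, ‖A‖ * ‖B‖ := Finset.sum_le_sum fun j _ =>
        (norm_mul_le _ _).trans (mul_le_mul (norm_entry_le_entrywise_sup_norm A)
          (norm_entry_le_entrywise_sup_norm B) (norm_nonneg _) (norm_nonneg _))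
    _ = Fintype.card m * ‖A‖ * ‖B‖ := by simp [mul_assoc]

theorem norm_le_one_of_mul_self_eq_of_transpose_eq {E : Matrix n n ℝ} (hE : E * E = E)
    (hEt : Eᵀ = E) : ‖E‖ ≤ 1 := by
  have hdiag : ∀ i, E i i = ∑ j, E i j ^ 2 := fun i => by
    have hsymm : ∀ j, E j i = E i j := fun j => by rw [← transpose_apply E i j, hEt]
    conv_lhs => rw [← hE]
    simp only [mul_apply, hsymm, sq]
  have hsq_le (i j : n) : E i j ^ 2 ≤ E i i := by
    rw [hdiag i]
    exact Finset.single_le_sum (f := fun j => E i j ^ 2) (fun _ _ => sq_nonneg _)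
      (Finset.mem_univ j)
  refine (norm_le_iff zero_le_one).2 fun i j => ?_
  have hii : E i i ≤ 1 := by nlinarith [hsq_le i i]
  rw [Real.norm_eq_abs, ← sq_le_one_iff_abs_le_one]
  exact (hsq_le i j).trans hii

end Matrix

/- With the sup norm installed only as a local instance, instance search cannot reconcile it
with the topology `Matrix` carries globally; these two structures are read off `m → n → ℝ`. -/
instance Matrix.instPseudoMetrizableSpaceReal {m n : Type*} [Fintype m] [Fintype n] :
    TopologicalSpace.PseudoMetrizableSpace (Matrix m n ℝ) :=
  inferInstanceAs (TopologicalSpace.PseudoMetrizableSpace (m → n → ℝ))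

instance Matrix.instENormedAddCommMonoidReal {m n : Type*} [Fintype m] [Fintype n] :
    ENormedAddCommMonoid (Matrix m n ℝ) :=
  inferInstanceAs (ENormedAddCommMonoid (m → n → ℝ))

section MatrixLp

variable {X l m n : Type*} [MeasurableSpace X] {μ : Measure X} [Fintype m]
  {f : X → Matrix l m ℝ} {g : X → Matrix m n ℝ} {p q r : ENNReal}

theorem MeasureTheory.AEStronglyMeasurable.matrix_mul (hf : AEStronglyMeasurable f μ)
    (hg : AEStronglyMeasurable g μ) : AEStronglyMeasurable (fun x => f x * g x) μ :=
  (continuous_fst.matrix_mul continuous_snd).comp_aestronglyMeasurable (hf.prodMk hg)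

variable [Fintype l] [Fintype n]

theorem MeasureTheory.MemLp.matrix_transpose (hf : MemLp f p μ) :
    MemLp (fun x => (f x)ᵀ) p μ :=
  hf.of_le (continuous_id.matrix_transpose.comp_aestronglyMeasurable hf.1)
    (ae_of_all _ fun x => (norm_transpose (f x)).le)

theorem MeasureTheory.MemLp.matrix_mul (hf : MemLp f p μ) (hg : MemLp g q μ)
    [p.HolderTriple q r] : MemLp (fun x => f x * g x) r μ :=
  hf.of_bilin (· * ·) (Fintype.card m) hg (hf.1.matrix_mul hg.1)
    (ae_of_all _ fun x => by
      rw [← NNReal.coe_le_coe]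
      push_cast
      exact norm_mul_le_card_mul (f x) (g x))

end MatrixLp

theorem MeasureTheory.IntegrableOn.intervalIntegrable_of_mem_Icc {E : Type*}
    [NormedAddCommGroup E] {f : ℝ → E} {a b x y : ℝ} (hf : IntegrableOn f (Icc a b))
    (hx : x ∈ Icc a b) (hy : y ∈ Icc a b) : IntervalIntegrable f volume x y :=
  (hf.mono_set (uIcc_subset_Icc hx hy)).intervalIntegrable

theorem intervalIntegral_congr_of_ae_restrict_Icc {E : Type*} [NormedAddCommGroup E]
    [NormedSpace ℝ E] {f g : ℝ → E} {s t T : ℝ} (hs : s ∈ Icc t T)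
    (h : f =ᵐ[volume.restrict (Icc t T)] g) : ∫ r in s..T, f r = ∫ r in s..T, g r := by
  refine intervalIntegral.integral_congr_ae_restrict (ae_restrict_of_ae_restrict_of_subset ?_ h)
  rw [uIoc_of_le hs.2]
  exact Ioc_subset_Icc_self.trans (Icc_subset_Icc hs.1 le_rfl)

theorem intervalIntegral_transpose {m n : Type*} [Fintype m] [Fintype n]
    (f : ℝ → Matrix m n ℝ) (a b : ℝ) :
    (∫ r in a..b, f r)ᵀ = ∫ r in a..b, (f r)ᵀ :=
  (LinearIsometry.intervalIntegral_comp_comm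
    ⟨(transposeLinearEquiv m n ℝ ℝ).toLinearMap, norm_transpose⟩ f).symm

theorem isClosed_setOf_forall_Ioc_eq_zero (u : ℝ → ℝ) (T : ℝ) :
    IsClosed {x | ∀ r ∈ Ioc x T, u r = 0} := by
  simp only [ofPred_forall]
  refine isClosed_iInter fun r => ?_
  by_cases h : u r = 0 ∨ T < r
  · convert isClosed_univ
    ext x
    simp only [mem_Ioc, mem_ofPred_eq, mem_univ, iff_true]
    grind
  · rw [not_or, not_lt] at h
    convert isClosed_Ici (a := r) using 1
    ext x
    simp [h.1, h.2]

theorem intervalIntegral_mul_eq_zero_of_forall_Ioc {u g : ℝ → ℝ} {x T : ℝ} (hxT : x ≤ T)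
    (hu : ∀ r ∈ Ioc x T, u r = 0) : ∫ r in x..T, g r * u r = 0 :=
  intervalIntegral.integral_zero_ae <| ae_of_all _ fun r hr => by
    rw [uIoc_of_le hxT] at hr
    rw [hu r hr, mul_zero]

theorem exists_Ico_intervalIntegral_lt {g : ℝ → ℝ} {t x : ℝ} (htx : t < x)
    (hg : IntegrableOn g (Icc t x)) {ε : ℝ} (hε : 0 < ε) :
    ∃ a ∈ Ico t x, ∫ r in a..x, g r < ε := by
  have hcont := intervalIntegral.continuousOn_primitive_interval_left
    (a := t) (b := x) (μ := volume) (f := g) (by rwa [uIcc_of_le htx.le])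
  rw [uIcc_of_le htx.le] at hcont
  have hlim := ((hcont x ⟨htx.le, le_rfl⟩).mono Ico_subset_Icc_self).eventually
    (gt_mem_nhds (show ∫ r in x..x, g r < ε by simpa using hε))
  rw [nhdsWithin_Ico_eq_nhdsLT htx] at hlim
  obtain ⟨a, ha, hax⟩ := (hlim.and (Ico_mem_nhdsLT htx)).exists
  exact ⟨a, hax, ha⟩

theorem eq_zero_of_le_integral_mul_of_integral_lt_one {u g : ℝ → ℝ} {a b : ℝ}
    (hu : ContinuousOn u (Icc a b)) (hu0 : ∀ s ∈ Icc a b, 0 ≤ u s)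
    (hg : IntegrableOn g (Icc a b)) (hg0 : ∀ r, 0 ≤ g r) (hg1 : ∫ r in a..b, g r < 1)
    (hle : ∀ s ∈ Icc a b, u s ≤ ∫ r in s..b, g r * u r) :
    ∀ s ∈ Icc a b, u s = 0 := by
  intro s hs
  obtain ⟨r₀, hr₀, hmax⟩ := isCompact_Icc.exists_isMaxOn ⟨s, hs⟩ hu
  have hb : b ∈ Icc a b := ⟨hs.1.trans hs.2, le_rfl⟩
  have hmax_le : u r₀ ≤ (∫ r in a..b, g r) * u r₀ :=
    calc u r₀ ≤ ∫ r in r₀..b, g r * u r := hle r₀ hr₀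
      _ ≤ ∫ r in r₀..b, g r * u r₀ := by
          refine intervalIntegral.integral_mono_on hr₀.2
            ((hg.mul_continuousOn hu isCompact_Icc).intervalIntegrable_of_mem_Icc hr₀ hb)
            ((hg.intervalIntegrable_of_mem_Icc hr₀ hb).mul_const _) fun r hr => ?_
          exact mul_le_mul_of_nonneg_left (hmax ⟨hr₀.1.trans hr.1, hr.2⟩) (hg0 r)
      _ = (∫ r in r₀..b, g r) * u r₀ := intervalIntegral.integral_mul_const _ _
      _ ≤ (∫ r in a..b, g r) * u r₀ := by
          refine mul_le_mul_of_nonneg_right ?_ (hu0 r₀ hr₀)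
          exact intervalIntegral.integral_mono_interval hr₀.1 hr₀.2 le_rfl
            (ae_of_all _ fun r => hg0 r) (hg.intervalIntegrable_of_mem_Icc ⟨le_rfl, hb.1⟩ hb)
  have hmax0 : u r₀ ≤ 0 := by nlinarith [hu0 r₀ hr₀]
  exact le_antisymm ((hmax hs).trans hmax0) (hu0 s hs)

theorem eq_zero_of_le_integral_mul {u g : ℝ → ℝ} {t T : ℝ}
    (hu : ContinuousOn u (Icc t T)) (hu0 : ∀ s ∈ Icc t T, 0 ≤ u s)
    (hg : IntegrableOn g (Icc t T)) (hg0 : ∀ r, 0 ≤ g r)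
    (hle : ∀ s ∈ Icc t T, u s ≤ ∫ r in s..T, g r * u r) :
    ∀ s ∈ Icc t T, u s = 0 := by
  -- Continuous induction downwards from `T`: on a short interval `[a, x]` to the left of a
  -- point of `Z`, the inequality is a contraction.
  set Z := {x | ∀ r ∈ Ioc x T, u r = 0}
  have hgu := hg.mul_continuousOn hu isCompact_Icc
  have hstep : ∀ x ∈ Z ∩ Ioc t T, (Z ∩ Ico t x).Nonempty := by
    rintro x ⟨hxZ, hx⟩
    obtain ⟨a, ha, hax⟩ := exists_Ico_intervalIntegral_lt hx.1
      (hg.mono_set (Icc_subset_Icc le_rfl hx.2)) one_pos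
    have hsub : Icc a x ⊆ Icc t T := Icc_subset_Icc ha.1 hx.2
    have hzero := eq_zero_of_le_integral_mul_of_integral_lt_one (hu.mono hsub)
      (fun s hs => hu0 s (hsub hs)) (hg.mono_set hsub) hg0 hax fun s hs => by
        have hxmem : x ∈ Icc t T := ⟨hx.1.le, hx.2⟩
        rw [← add_zero (∫ r in s..x, g r * u r),
          ← intervalIntegral_mul_eq_zero_of_forall_Ioc hx.2 hxZ,
          intervalIntegral.integral_add_adjacent_intervals
            (hgu.intervalIntegrable_of_mem_Icc (hsub hs) hxmem)
            (hgu.intervalIntegrable_of_mem_Icc hxmem ⟨hx.1.le.trans hx.2, le_rfl⟩)]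
        exact hle s (hsub hs)
    refine ⟨a, fun r hr => ?_, ha.1, ha.2⟩
    rcases le_or_gt r x with hrx | hxr
    · exact hzero r ⟨hr.1.le, hrx⟩
    · exact hxZ r ⟨hxr, hr.2⟩
  rintro s ⟨hts, hsT⟩
  have htZ : t ∈ Z :=
    ((isClosed_setOf_forall_Ioc_eq_zero u T).inter isClosed_Icc).mem_of_ge_of_forall_exists_lt
      (fun r hr => absurd hr.2 (not_le.2 hr.1)) (hts.trans hsT) hstep
  rcases hts.lt_or_eq with hts | rfl
  · exact htZ s ⟨hts, hsT⟩
  · refine le_antisymm ?_ (hu0 t ⟨le_rfl, hsT⟩)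
    simpa [intervalIntegral_mul_eq_zero_of_forall_Ioc hsT htZ] using hle t ⟨le_rfl, hsT⟩

theorem eq_zero_of_eq_integral_of_norm_le {E : Type*} [NormedAddCommGroup E] [NormedSpace ℝ E]
    {Δ F : ℝ → E} {g : ℝ → ℝ} {t T : ℝ} (hΔ : ContinuousOn Δ (Icc t T))
    (hg : IntegrableOn g (Icc t T)) (hg0 : ∀ r, 0 ≤ g r)
    (hF : ∀ᵐ r ∂volume.restrict (Icc t T), ‖F r‖ ≤ g r * ‖Δ r‖)
    (heq : ∀ s ∈ Icc t T, Δ s = ∫ r in s..T, F r) :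
    ∀ s ∈ Icc t T, Δ s = 0 := by
  have hF' := (ae_restrict_iff' measurableSet_Icc).1 hF
  have hnorm := eq_zero_of_le_integral_mul hΔ.norm (fun _ _ => norm_nonneg _) hg hg0
    fun s hs => by
      rw [heq s hs]
      refine intervalIntegral.norm_integral_le_of_norm_le hs.2 ?_
        ((hg.mul_continuousOn hΔ.norm isCompact_Icc).intervalIntegrable_of_mem_Icc hs
          ⟨hs.1.trans hs.2, le_rfl⟩)
      filter_upwards [hF'] with r hr hrs
      exact hr ⟨hs.1.trans hrs.1.le, hrs.2⟩
  exact fun s hs => norm_eq_zero.1 (hnorm s hs)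

section Lyapunov

variable {n α : Type*} [Fintype n]

def lyapunovOp [CommRing α] (A C X : Matrix n n α) : Matrix n n α :=
  X * A + Aᵀ * X + Cᵀ * X * C

theorem lyapunovOp_transpose [CommRing α] (A C X : Matrix n n α) :
    (lyapunovOp A C X)ᵀ = lyapunovOp A C Xᵀ := by
  simp only [lyapunovOp, transpose_add, transpose_mul, transpose_transpose, Matrix.mul_assoc]
  abel

theorem lyapunovOp_sub [CommRing α] (A C X Y : Matrix n n α) :
    lyapunovOp A C X - lyapunovOp A C Y = lyapunovOp A C (X - Y) := by
  simp only [lyapunovOp, Matrix.sub_mul, Matrix.mul_sub]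
  abel

theorem norm_lyapunovOp_le [NormedCommRing α] (A C X : Matrix n n α) :
    ‖lyapunovOp A C X‖
      ≤ (2 * Fintype.card n * ‖A‖ + Fintype.card n ^ 2 * ‖C‖ ^ 2) * ‖X‖ := by
  have h₁ := norm_mul_le_card_mul X A
  have h₂ := norm_mul_le_card_mul Aᵀ X
  have h₃ := (norm_mul_le_card_mul (Cᵀ * X) C).trans <| mul_le_mul_of_nonneg_right
    (mul_le_mul_of_nonneg_left (norm_mul_le_card_mul Cᵀ X) (Nat.cast_nonneg _)) (norm_nonneg C)
  rw [norm_transpose] at h₂ h₃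
  calc ‖lyapunovOp A C X‖ ≤ ‖X * A‖ + ‖Aᵀ * X‖ + ‖Cᵀ * X * C‖ := norm_add₃_le
    _ ≤ _ := add_le_add (add_le_add h₁ h₂) h₃
    _ = _ := by ring

end Lyapunov

theorem transpose_eq_of_eq_add_integral {n : Type*} [Fintype n] {t T : ℝ}
    {P f Ac Cc : ℝ → Matrix n n ℝ} {G : Matrix n n ℝ} (hG : Gᵀ = G)
    (hP : ContinuousOn P (Icc t T)) (hf : IntegrableOn f (Icc t T))
    (hPf : ∀ s ∈ Icc t T, P s = G + ∫ r in s..T, f r)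
    (hAc : IntegrableOn Ac (Icc t T)) (hCc : MemLp Cc 2 (volume.restrict (Icc t T)))
    (hskew : ∀ᵐ r ∂volume.restrict (Icc t T),
      f r - (f r)ᵀ = lyapunovOp (Ac r) (Cc r) (P r - (P r)ᵀ)) :
    ∀ s ∈ Icc t T, (P s)ᵀ = P s := by
  have hfT : IntegrableOn (fun r => (f r)ᵀ) (Icc t T) :=
    memLp_one_iff_integrable.1 (memLp_one_iff_integrable.2 hf).matrix_transpose
  have hskew_zero := eq_zero_of_eq_integral_of_norm_le
    (Δ := fun s => P s - (P s)ᵀ) (F := fun r => f r - (f r)ᵀ)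
    (g := fun r => 2 * Fintype.card n * ‖Ac r‖ + Fintype.card n ^ 2 * ‖Cc r‖ ^ 2)
    (hP.sub (continuous_id.matrix_transpose.comp_continuousOn hP))
    ((hAc.norm.const_mul _).fun_add
      (((memLp_two_iff_integrable_sq_norm hCc.1).1 hCc).const_mul _))
    (fun r => by positivity)
    (by filter_upwards [hskew] with r hr using hr ▸ norm_lyapunovOp_le _ _ _)
    fun s hs => by
      have hT : T ∈ Icc t T := ⟨hs.1.trans hs.2, le_rfl⟩
      rw [intervalIntegral.integral_sub (hf.intervalIntegrable_of_mem_Icc hs hT)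
        (hfT.intervalIntegrable_of_mem_Icc hs hT),
        ← intervalIntegral_transpose, hPf s hs, transpose_add, hG, add_sub_add_left_eq_sub]
  exact fun s hs => (sub_eq_zero.1 (hskew_zero s hs)).symm

namespace StochasticLQ

variable {n m α : Type*} [Fintype n] [Fintype m]

section Algebra

variable [CommRing α] {A C Q P : Matrix n n α} {B D : Matrix n m α} {S Θ : Matrix m n α}
  {R Y : Matrix m m α}

def hatS (B : Matrix n m α) (C : Matrix n n α) (D : Matrix n m α) (S : Matrix m n α)
    (P : Matrix n n α) : Matrix m n α :=
  Bᵀ * P + Dᵀ * P * C + S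

def hatR (D : Matrix n m α) (R : Matrix m m α) (P : Matrix n n α) : Matrix m m α :=
  R + Dᵀ * P * D

omit [Fintype m] in
theorem hatR_transpose (hR : Rᵀ = R) (hP : Pᵀ = P) : (hatR D R P)ᵀ = hatR D R P := by
  simp only [hatR, transpose_add, transpose_mul, transpose_transpose, hR, hP, Matrix.mul_assoc]

theorem hatS_eq_neg (hstat : hatS B C D S P + hatR D R P * Θ = 0) :
    hatS B C D S P = -(hatR D R P * Θ) :=
  eq_neg_of_add_eq_zero_left hstat

theorem linearIntegrand_eq_lyapunovOp_add (hstat : hatS B C D S P + hatR D R P * Θ = 0) :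
    P * A + Aᵀ * P + Cᵀ * P * C + (P * B + Cᵀ * P * D + Sᵀ) * Θ + Q
      = lyapunovOp (A + B * Θ) (C + D * Θ) P + (Q + Θᵀ * R * Θ + Sᵀ * Θ + Θᵀ * S) := by
  have h : lyapunovOp (A + B * Θ) (C + D * Θ) P + (Q + Θᵀ * R * Θ + Sᵀ * Θ + Θᵀ * S)
      = P * A + Aᵀ * P + Cᵀ * P * C + (P * B + Cᵀ * P * D + Sᵀ) * Θ + Q
        + Θᵀ * (hatS B C D S P + hatR D R P * Θ) := by
    simp only [lyapunovOp, hatS, hatR, Matrix.add_mul, Matrix.mul_add, transpose_add,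
      transpose_mul, Matrix.mul_assoc]
    abel
  rw [h, hstat, Matrix.mul_zero, add_zero]

theorem linearIntegrand_sub_transpose (hstat : hatS B C D S P + hatR D R P * Θ = 0)
    (hQ : Qᵀ = Q) (hR : Rᵀ = R) :
    let f := P * A + Aᵀ * P + Cᵀ * P * C + (P * B + Cᵀ * P * D + Sᵀ) * Θ + Q
    f - fᵀ = lyapunovOp (A + B * Θ) (C + D * Θ) (P - Pᵀ) := by
  have hW : (Q + Θᵀ * R * Θ + Sᵀ * Θ + Θᵀ * S)ᵀ = Q + Θᵀ * R * Θ + Sᵀ * Θ + Θᵀ * S := by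
    simp only [transpose_add, transpose_mul, transpose_transpose, hQ, hR, Matrix.mul_assoc]
    abel
  simp only [linearIntegrand_eq_lyapunovOp_add hstat, transpose_add, lyapunovOp_transpose, hW,
    ← lyapunovOp_sub]
  abel

theorem hatR_mul_mul_hatS (hstat : hatS B C D S P + hatR D R P * Θ = 0)
    (hY : hatR D R P * Y * hatR D R P = hatR D R P) :
    hatR D R P * Y * hatS B C D S P = hatS B C D S P := by
  rw [hatS_eq_neg hstat, Matrix.mul_neg, ← Matrix.mul_assoc, hY]

theorem linearIntegrand_eq_riccatiIntegrand (hstat : hatS B C D S P + hatR D R P * Θ = 0)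
    (hP : Pᵀ = P) (hR : Rᵀ = R) (hY : hatR D R P * Y * hatR D R P = hatR D R P) :
    P * A + Aᵀ * P + Cᵀ * P * C + (P * B + Cᵀ * P * D + Sᵀ) * Θ + Q
      = P * A + Aᵀ * P + Cᵀ * P * C + Q - (hatS B C D S P)ᵀ * Y * hatS B C D S P := by
  have hSt : P * B + Cᵀ * P * D + Sᵀ = (hatS B C D S P)ᵀ := by
    simp only [hatS, transpose_add, transpose_mul, transpose_transpose, hP, Matrix.mul_assoc]
  have hquad : (hatS B C D S P)ᵀ * Y * hatS B C D S P = -((hatS B C D S P)ᵀ * Θ) := by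
    rw [hatS_eq_neg hstat]
    simp only [transpose_neg, transpose_mul, hatR_transpose hR hP, Matrix.neg_mul,
      Matrix.mul_neg, neg_neg, Matrix.mul_assoc]
    rw [← Matrix.mul_assoc Y, ← Matrix.mul_assoc (hatR D R P) (Y * _),
      ← Matrix.mul_assoc (hatR D R P) Y, hY]
  rw [hSt, hquad, sub_neg_eq_add]
  abel

end Algebra

theorem norm_mul_hatS_le {C P : Matrix n n ℝ} {B D : Matrix n m ℝ} {S Θ : Matrix m n ℝ}
    {R Y : Matrix m m ℝ} (hstat : hatS B C D S P + hatR D R P * Θ = 0)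
    (hY : Y * hatR D R P * Y = Y) (hYt : (Y * hatR D R P)ᵀ = Y * hatR D R P) :
    ‖Y * hatS B C D S P‖ ≤ Fintype.card m * ‖Θ‖ := by
  have hE : ‖Y * hatR D R P‖ ≤ 1 := by
    refine norm_le_one_of_mul_self_eq_of_transpose_eq ?_ hYt
    conv_rhs => rw [← hY]
    simp only [Matrix.mul_assoc]
  rw [hatS_eq_neg hstat, Matrix.mul_neg, norm_neg, ← Matrix.mul_assoc]
  calc _ ≤ Fintype.card m * ‖Y * hatR D R P‖ * ‖Θ‖ := norm_mul_le_card_mul _ _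
    _ ≤ Fintype.card m * 1 * ‖Θ‖ := by gcongr
    _ = _ := by rw [mul_one]

section Integrability

variable {X : Type*} [MeasurableSpace X] {μ : Measure X} {A C Q P : X → Matrix n n ℝ}
  {B D : X → Matrix n m ℝ} {S Θ : X → Matrix m n ℝ}

theorem integrable_linearIntegrand (hA : MemLp A 1 μ) (hB : MemLp B 2 μ) (hC : MemLp C 2 μ)
    (hD : MemLp D ⊤ μ) (hQ : MemLp Q 1 μ) (hS : MemLp S 2 μ) (hP : MemLp P ⊤ μ)
    (hΘ : MemLp Θ 2 μ) :
    Integrable (fun r => P r * A r + (A r)ᵀ * P r + (C r)ᵀ * P r * C r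
      + (P r * B r + (C r)ᵀ * P r * D r + (S r)ᵀ) * Θ r + Q r) μ :=
  memLp_one_iff_integrable.1 <|
    ((((hP.matrix_mul hA).add (hA.matrix_transpose.matrix_mul hP)).add
      ((hC.matrix_transpose.matrix_mul hP (r := 2)).matrix_mul hC)).add
      ((((hP.matrix_mul hB).add
        ((hC.matrix_transpose.matrix_mul hP (r := 2)).matrix_mul hD)).add
        hS.matrix_transpose).matrix_mul hΘ)).add hQ

theorem memLp_hatS (hB : MemLp B 2 μ) (hC : MemLp C 2 μ) (hD : MemLp D ⊤ μ)
    (hS : MemLp S 2 μ) (hP : MemLp P ⊤ μ) :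
    MemLp (fun r => hatS (B r) (C r) (D r) (S r) (P r)) 2 μ :=
  ((hB.matrix_transpose.matrix_mul hP).add
    ((hD.matrix_transpose.matrix_mul hP (r := ⊤)).matrix_mul hC)).add hS

end Integrability

end StochasticLQ

theorem closed_loop_gain_gives_regular_riccati_solution_general
    {n m : ℕ}
    (t T : ℝ)
    (A : ℝ → Matrix (Fin n) (Fin n) ℝ) (B : ℝ → Matrix (Fin n) (Fin m) ℝ)
    (C : ℝ → Matrix (Fin n) (Fin n) ℝ) (D : ℝ → Matrix (Fin n) (Fin m) ℝ)
    (Q : ℝ → Matrix (Fin n) (Fin n) ℝ) (S : ℝ → Matrix (Fin m) (Fin n) ℝ)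
    (R : ℝ → Matrix (Fin m) (Fin m) ℝ) (G : Matrix (Fin n) (Fin n) ℝ)
    -- A ∈ L¹(t,T;ℝ^{n×n})
    (hAmeas : AEStronglyMeasurable A (volume.restrict (Set.Icc t T)))
    (hA : IntegrableOn (fun s => ‖A s‖) (Set.Icc t T))
    -- B ∈ L²(t,T;ℝ^{n×m})
    (hBmeas : AEStronglyMeasurable B (volume.restrict (Set.Icc t T)))
    (hB : IntegrableOn (fun s => ‖B s‖ ^ 2) (Set.Icc t T))
    -- C ∈ L²(t,T;ℝ^{n×n})
    (hCmeas : AEStronglyMeasurable C (volume.restrict (Set.Icc t T)))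
    (hC : IntegrableOn (fun s => ‖C s‖ ^ 2) (Set.Icc t T))
    -- D ∈ L^∞(t,T;ℝ^{n×m})
    (hDmeas : AEStronglyMeasurable D (volume.restrict (Set.Icc t T)))
    (hD : ∃ K : ℝ, ∀ᵐ s ∂volume.restrict (Set.Icc t T), ‖D s‖ ≤ K)
    -- Q ∈ L¹(t,T;𝕊ⁿ)
    (hQmeas : AEStronglyMeasurable Q (volume.restrict (Set.Icc t T)))
    (hQ : IntegrableOn (fun s => ‖Q s‖) (Set.Icc t T))
    (hQsymm : ∀ᵐ s ∂volume.restrict (Set.Icc t T), (Q s)ᵀ = Q s)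
    -- S ∈ L²(t,T;ℝ^{m×n})
    (hSmeas : AEStronglyMeasurable S (volume.restrict (Set.Icc t T)))
    (hS : IntegrableOn (fun s => ‖S s‖ ^ 2) (Set.Icc t T))
    -- R ∈ L^∞(t,T;𝕊ᵐ)
    (hRsymm : ∀ᵐ s ∂volume.restrict (Set.Icc t T), (R s)ᵀ = R s)
    -- G ∈ 𝕊ⁿ
    (hG : Gᵀ = G)
    -- P continuous, Θ ∈ L²
    (P : ℝ → Matrix (Fin n) (Fin n) ℝ) (hPcont : ContinuousOn P (Set.Icc t T))
    (Θ : ℝ → Matrix (Fin m) (Fin n) ℝ)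
    (hΘmeas : AEStronglyMeasurable Θ (volume.restrict (Set.Icc t T)))
    (hΘ : IntegrableOn (fun s => ‖Θ s‖ ^ 2) (Set.Icc t T))
    -- the Lyapunov-type linear integral equation
    (hPeq : ∀ s ∈ Set.Icc t T,
      P s = G + ∫ r in s..T,
        (P r * A r + (A r)ᵀ * P r + (C r)ᵀ * P r * C r
          + (P r * B r + (C r)ᵀ * P r * D r + (S r)ᵀ) * Θ r + Q r))
    -- the stationarity constraint
    (hstat : ∀ᵐ s ∂volume.restrict (Set.Icc t T),
      (B s)ᵀ * P s + (D s)ᵀ * P s * C s + S s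
        + (R s + (D s)ᵀ * P s * D s) * Θ s = 0)
    -- R̂† : a measurable pointwise Moore–Penrose pseudoinverse of R̂ = R + DᵀPD
    (Rdag : ℝ → Matrix (Fin m) (Fin m) ℝ)
    (hRdagmeas : AEStronglyMeasurable Rdag (volume.restrict (Set.Icc t T)))
    (hRdag : ∀ᵐ s ∂volume.restrict (Set.Icc t T),
      (R s + (D s)ᵀ * P s * D s) * Rdag s * (R s + (D s)ᵀ * P s * D s)
          = R s + (D s)ᵀ * P s * D s ∧
        Rdag s * (R s + (D s)ᵀ * P s * D s) * Rdag s = Rdag s ∧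
        ((R s + (D s)ᵀ * P s * D s) * Rdag s)ᵀ = (R s + (D s)ᵀ * P s * D s) * Rdag s ∧
        (Rdag s * (R s + (D s)ᵀ * P s * D s))ᵀ = Rdag s * (R s + (D s)ᵀ * P s * D s)) :
    -- (i) P is symmetric-valued
    (∀ s ∈ Set.Icc t T, (P s)ᵀ = P s) ∧
    -- (ii) range condition R̂R̂†M = M a.e.
    (∀ᵐ s ∂volume.restrict (Set.Icc t T),
      (R s + (D s)ᵀ * P s * D s) * Rdag s
          * ((B s)ᵀ * P s + (D s)ᵀ * P s * C s + S s)
        = (B s)ᵀ * P s + (D s)ᵀ * P s * C s + S s) ∧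
    -- (iii) P solves the Riccati integral equation
    (∀ s ∈ Set.Icc t T,
      P s = G + ∫ r in s..T,
        (P r * A r + (A r)ᵀ * P r + (C r)ᵀ * P r * C r + Q r
          - ((B r)ᵀ * P r + (D r)ᵀ * P r * C r + S r)ᵀ * Rdag r
              * ((B r)ᵀ * P r + (D r)ᵀ * P r * C r + S r))) ∧
    -- (iv) R̂†M ∈ L²(t,T;ℝ^{m×n})
    (AEStronglyMeasurable
        (fun s => Rdag s * ((B s)ᵀ * P s + (D s)ᵀ * P s * C s + S s))
        (volume.restrict (Set.Icc t T)) ∧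
      IntegrableOn
        (fun s => ‖Rdag s * ((B s)ᵀ * P s + (D s)ᵀ * P s * C s + S s)‖ ^ 2)
        (Set.Icc t T)) := by
  obtain ⟨K, hK⟩ := hD
  obtain ⟨KP, hKP⟩ := isCompact_Icc.exists_bound_of_continuousOn hPcont
  have hP : MemLp P ⊤ (volume.restrict (Icc t T)) :=
    memLp_top_of_bound (hPcont.aestronglyMeasurable measurableSet_Icc) KP
      ((ae_restrict_iff' measurableSet_Icc).2 (ae_of_all _ hKP))
  have hD := memLp_top_of_bound hDmeas K hK
  have hA1 := memLp_one_iff_integrable.2 ((integrable_norm_iff hAmeas).1 hA)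
  have hQ1 := memLp_one_iff_integrable.2 ((integrable_norm_iff hQmeas).1 hQ)
  have hB2 := (memLp_two_iff_integrable_sq_norm hBmeas).2 hB
  have hC2 := (memLp_two_iff_integrable_sq_norm hCmeas).2 hC
  have hS2 := (memLp_two_iff_integrable_sq_norm hSmeas).2 hS
  have hΘ2 := (memLp_two_iff_integrable_sq_norm hΘmeas).2 hΘ
  have hPsymm := transpose_eq_of_eq_add_integral hG hPcont
    (StochasticLQ.integrable_linearIntegrand hA1 hB2 hC2 hD hQ1 hS2 hP hΘ2) hPeq
    (memLp_one_iff_integrable.1 (hA1.add (hB2.matrix_mul hΘ2))) (hC2.add (hD.matrix_mul hΘ2))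
    (by filter_upwards [hstat, hQsymm, hRsymm] with r h₁ h₂ h₃
        using StochasticLQ.linearIntegrand_sub_transpose h₁ h₂ h₃)
  have hL2 : MemLp (fun s => Rdag s * ((B s)ᵀ * P s + (D s)ᵀ * P s * C s + S s)) 2
      (volume.restrict (Icc t T)) :=
    hΘ2.of_le_mul (hRdagmeas.matrix_mul (StochasticLQ.memLp_hatS hB2 hC2 hD hS2 hP).1) <| by
      filter_upwards [hstat, hRdag] with s h₁ h₂
        using StochasticLQ.norm_mul_hatS_le h₁ h₂.2.1 h₂.2.2.2
  refine ⟨hPsymm, ?_, fun s hs => ?_, hL2.1, (memLp_two_iff_integrable_sq_norm hL2.1).1 hL2⟩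
  · filter_upwards [hstat, hRdag] with s h₁ h₂ using StochasticLQ.hatR_mul_mul_hatS h₁ h₂.1
  · refine (hPeq s hs).trans (congrArg (G + ·) (intervalIntegral_congr_of_ae_restrict_Icc hs ?_))
    filter_upwards [hstat, hRsymm, hRdag, ae_restrict_mem measurableSet_Icc] with r h₁ h₂ h₃ hr
    exact StochasticLQ.linearIntegrand_eq_riccatiIntegrand h₁ (hPsymm r hr) h₂ h₃.1

/-- Deterministic core of the necessity part of Theorem 5.2: if a continuous `P` and an
`L²` gain `Θ` satisfy the Lyapunov-type linear integral equation together with the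
stationarity constraint `BᵀP + DᵀPC + S + (R + DᵀPD)Θ = 0` a.e., then (i) `P` is
symmetric-valued, (ii) the range condition `R̂R̂†M = M` holds a.e., (iii) `P` solves the
Riccati integral equation, and (iv) `R̂†M ∈ L²`. -/
theorem closed_loop_gain_gives_regular_riccati_solution
    {n m : ℕ} (hn : 1 ≤ n) (hm : 1 ≤ m)
    (t T : ℝ) (ht : 0 ≤ t) (htT : t < T)
    (A : ℝ → Matrix (Fin n) (Fin n) ℝ) (B : ℝ → Matrix (Fin n) (Fin m) ℝ)
    (C : ℝ → Matrix (Fin n) (Fin n) ℝ) (D : ℝ → Matrix (Fin n) (Fin m) ℝ)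
    (Q : ℝ → Matrix (Fin n) (Fin n) ℝ) (S : ℝ → Matrix (Fin m) (Fin n) ℝ)
    (R : ℝ → Matrix (Fin m) (Fin m) ℝ) (G : Matrix (Fin n) (Fin n) ℝ)
    -- A ∈ L¹(t,T;ℝ^{n×n})
    (hAmeas : AEStronglyMeasurable A (volume.restrict (Set.Icc t T)))
    (hA : IntegrableOn (fun s => ‖A s‖) (Set.Icc t T))
    -- B ∈ L²(t,T;ℝ^{n×m})
    (hBmeas : AEStronglyMeasurable B (volume.restrict (Set.Icc t T)))
    (hB : IntegrableOn (fun s => ‖B s‖ ^ 2) (Set.Icc t T))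
    -- C ∈ L²(t,T;ℝ^{n×n})
    (hCmeas : AEStronglyMeasurable C (volume.restrict (Set.Icc t T)))
    (hC : IntegrableOn (fun s => ‖C s‖ ^ 2) (Set.Icc t T))
    -- D ∈ L^∞(t,T;ℝ^{n×m})
    (hDmeas : AEStronglyMeasurable D (volume.restrict (Set.Icc t T)))
    (hD : ∃ K : ℝ, ∀ᵐ s ∂volume.restrict (Set.Icc t T), ‖D s‖ ≤ K)
    -- Q ∈ L¹(t,T;𝕊ⁿ)
    (hQmeas : AEStronglyMeasurable Q (volume.restrict (Set.Icc t T)))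
    (hQ : IntegrableOn (fun s => ‖Q s‖) (Set.Icc t T))
    (hQsymm : ∀ᵐ s ∂volume.restrict (Set.Icc t T), (Q s)ᵀ = Q s)
    -- S ∈ L²(t,T;ℝ^{m×n})
    (hSmeas : AEStronglyMeasurable S (volume.restrict (Set.Icc t T)))
    (hS : IntegrableOn (fun s => ‖S s‖ ^ 2) (Set.Icc t T))
    -- R ∈ L^∞(t,T;𝕊ᵐ)
    (hRmeas : AEStronglyMeasurable R (volume.restrict (Set.Icc t T)))
    (hR : ∃ K : ℝ, ∀ᵐ s ∂volume.restrict (Set.Icc t T), ‖R s‖ ≤ K)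
    (hRsymm : ∀ᵐ s ∂volume.restrict (Set.Icc t T), (R s)ᵀ = R s)
    -- G ∈ 𝕊ⁿ
    (hG : Gᵀ = G)
    -- P continuous, Θ ∈ L²
    (P : ℝ → Matrix (Fin n) (Fin n) ℝ) (hPcont : ContinuousOn P (Set.Icc t T))
    (Θ : ℝ → Matrix (Fin m) (Fin n) ℝ)
    (hΘmeas : AEStronglyMeasurable Θ (volume.restrict (Set.Icc t T)))
    (hΘ : IntegrableOn (fun s => ‖Θ s‖ ^ 2) (Set.Icc t T))
    -- the Lyapunov-type linear integral equation
    (hPeq : ∀ s ∈ Set.Icc t T,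
      P s = G + ∫ r in s..T,
        (P r * A r + (A r)ᵀ * P r + (C r)ᵀ * P r * C r
          + (P r * B r + (C r)ᵀ * P r * D r + (S r)ᵀ) * Θ r + Q r))
    -- the stationarity constraint
    (hstat : ∀ᵐ s ∂volume.restrict (Set.Icc t T),
      (B s)ᵀ * P s + (D s)ᵀ * P s * C s + S s
        + (R s + (D s)ᵀ * P s * D s) * Θ s = 0)
    -- R̂† : a measurable pointwise Moore–Penrose pseudoinverse of R̂ = R + DᵀPD
    (Rdag : ℝ → Matrix (Fin m) (Fin m) ℝ)
    (hRdagmeas : AEStronglyMeasurable Rdag (volume.restrict (Set.Icc t T)))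
    (hRdag : ∀ᵐ s ∂volume.restrict (Set.Icc t T),
      (R s + (D s)ᵀ * P s * D s) * Rdag s * (R s + (D s)ᵀ * P s * D s)
          = R s + (D s)ᵀ * P s * D s ∧
        Rdag s * (R s + (D s)ᵀ * P s * D s) * Rdag s = Rdag s ∧
        ((R s + (D s)ᵀ * P s * D s) * Rdag s)ᵀ = (R s + (D s)ᵀ * P s * D s) * Rdag s ∧
        (Rdag s * (R s + (D s)ᵀ * P s * D s))ᵀ = Rdag s * (R s + (D s)ᵀ * P s * D s)) :
    -- (i) P is symmetric-valued
    (∀ s ∈ Set.Icc t T, (P s)ᵀ = P s) ∧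
    -- (ii) range condition R̂R̂†M = M a.e.
    (∀ᵐ s ∂volume.restrict (Set.Icc t T),
      (R s + (D s)ᵀ * P s * D s) * Rdag s
          * ((B s)ᵀ * P s + (D s)ᵀ * P s * C s + S s)
        = (B s)ᵀ * P s + (D s)ᵀ * P s * C s + S s) ∧
    -- (iii) P solves the Riccati integral equation
    (∀ s ∈ Set.Icc t T,
      P s = G + ∫ r in s..T,
        (P r * A r + (A r)ᵀ * P r + (C r)ᵀ * P r * C r + Q r
          - ((B r)ᵀ * P r + (D r)ᵀ * P r * C r + S r)ᵀ * Rdag r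
              * ((B r)ᵀ * P r + (D r)ᵀ * P r * C r + S r))) ∧
    -- (iv) R̂†M ∈ L²(t,T;ℝ^{m×n})
    (AEStronglyMeasurable
        (fun s => Rdag s * ((B s)ᵀ * P s + (D s)ᵀ * P s * C s + S s))
        (volume.restrict (Set.Icc t T)) ∧
      IntegrableOn
        (fun s => ‖Rdag s * ((B s)ᵀ * P s + (D s)ᵀ * P s * C s + S s)‖ ^ 2)
        (Set.Icc t T)) :=
  closed_loop_gain_gives_regular_riccati_solution_general t T A B C D Q S R G hAmeas hA hBmeas hB
    hCmeas hC hDmeas hD hQmeas hQ hQsymm hSmeas hS hRsymm hG P hPcont Θ hΘmeas hΘ hPeq hstat Rdag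
    hRdagmeas hRdag
end

section
/- Define R : [0,1] → ℝ by R(s) = s³/2 − s², and P : [0,1] → ℝ by P(s) = s². Then: (i) P(1) = 1 and, for every s ∈ (0,1], s³ − 2s² + 2P(s) = s³ ≠ 0 and P'(s) = 2P(s)²/(s³ − 2s² + 2P(s)); (ii) R(s) + P(s) = s³/2 ≥ 0 for all s ∈ [0,1]; (iii) nevertheless, the associated feedback gain Θ(s) = −(R(s) + P(s))⁻¹ P(s) = −2/s, s ∈ (0,1], is not square-integrable on (0,1), i.e. ∫₀¹ (2/s)² ds = +∞. -/
open MeasureTheory Set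

/-! Everything except the last claim is a direct computation with `P s = s ^ 2` and
`R s + P s = s ^ 3 / 2`. The gain `-2 / s` is not square-integrable because its square is a
multiple of `s ^ (-2)`, and `s ^ r` is integrable near `0` only for `r > -1`. -/

lemma not_integrableOn_Ioo_zero_div_sq {c t : ℝ} (hc : c ≠ 0) (ht : 0 < t) :
    ¬ IntegrableOn (fun s : ℝ => (c / s) ^ 2) (Ioo 0 t) := by
  intro h
  have hrpow : IntegrableOn (fun s : ℝ => s ^ (-2 : ℝ)) (Ioo 0 t) := by
    refine IntegrableOn.congr_fun (h.const_mul (c ^ 2)⁻¹) (fun s hs => ?_) measurableSet_Ioo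
    rw [Real.rpow_neg hs.1.le, div_pow, Real.rpow_two]
    field_simp
  have hexp : (-1 : ℝ) < -2 := (intervalIntegral.integrableOn_Ioo_rpow_iff ht).1 hrpow
  norm_num at hexp

lemma setLIntegral_Ioo_zero_ofReal_div_sq_eq_top {c t : ℝ} (hc : c ≠ 0) (ht : 0 < t) :
    ∫⁻ s in Ioo 0 t, ENNReal.ofReal ((c / s) ^ 2) = ⊤ := by
  by_contra h
  refine not_integrableOn_Ioo_zero_div_sq hc ht
    ((lintegral_ofReal_ne_top_iff_integrable ?_ ?_).1 h)
  · exact ((measurable_const.div measurable_id).pow_const 2).aestronglyMeasurable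
  · exact Filter.Eventually.of_forall fun s => sq_nonneg _

/-- Example 6.1: with `R(s) = s³/2 − s²`, the function `P(s) = s²` solves the Riccati
equation `P' = 2P²/(s³ − 2s² + 2P)`, `P(1) = 1`, with `R + P = s³/2 ≥ 0` on `[0,1]`;
nevertheless the feedback gain `Θ(s) = −(R(s)+P(s))⁻¹P(s) = −2/s` fails to be
square-integrable on `(0,1)`. -/
theorem example61_riccati_solvable_but_gain_not_L2
    (R P : ℝ → ℝ)
    (hR : ∀ s, R s = s ^ 3 / 2 - s ^ 2)
    (hP : ∀ s, P s = s ^ 2) :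
    -- (i) terminal value and the Riccati differential equation on (0,1]
    (P 1 = 1 ∧
      ∀ s ∈ Set.Ioc (0 : ℝ) 1,
        s ^ 3 - 2 * s ^ 2 + 2 * P s = s ^ 3 ∧ s ^ 3 ≠ 0 ∧
          HasDerivAt P (2 * (P s) ^ 2 / (s ^ 3 - 2 * s ^ 2 + 2 * P s)) s) ∧
    -- (ii) R + P = s³/2 ≥ 0 on [0,1]
    (∀ s ∈ Set.Icc (0 : ℝ) 1, R s + P s = s ^ 3 / 2 ∧ 0 ≤ s ^ 3 / 2) ∧
    -- (iii) the feedback gain is −2/s and is not square-integrable on (0,1)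
    ((∀ s ∈ Set.Ioc (0 : ℝ) 1, -(R s + P s)⁻¹ * P s = -2 / s) ∧
      ∫⁻ s in Set.Ioo (0 : ℝ) 1, ENNReal.ofReal ((2 / s) ^ 2) = ⊤) := by
  obtain rfl : R = fun s => s ^ 3 / 2 - s ^ 2 := funext hR
  obtain rfl : P = fun s => s ^ 2 := funext hP
  refine ⟨⟨one_pow 2, fun s hs => ?_⟩, fun s hs => ⟨by ring, by have := hs.1; positivity⟩,
    fun s hs => ?_, setLIntegral_Ioo_zero_ofReal_div_sq_eq_top two_ne_zero one_pos⟩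
  · have hs0 : s ≠ 0 := hs.1.ne'
    have hden : s ^ 3 - 2 * s ^ 2 + 2 * s ^ 2 = s ^ 3 := by ring
    refine ⟨hden, pow_ne_zero 3 hs0, ?_⟩
    rw [hden]
    refine (hasDerivAt_pow 2 s).congr_deriv ?_
    field_simp
    ring
  · rw [sub_add_cancel]
    field_simp [hs.1.ne']
end

section
/- Let P : [0,1] → ℝ be continuous, differentiable on (0,1], with P(1) = 1, such that s³ − 2s² + 2P(s) ≠ 0 and P'(s) = 2P(s)²/(s³ − 2s² + 2P(s)) for every s ∈ (0,1]. Then P(s) = s² for all s ∈ [0,1]. -/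
open Set

/-! The Riccati right-hand side minus its value `2s` at `P = s²` factors as `c(s) (P - s²)`, with
`c` continuous wherever the denominator does not vanish. Hence `P - s²` solves a linear ODE with
bounded coefficient on each `[a, 1]`, `0 < a`, and vanishes at `1`; Grönwall uniqueness makes it
vanish on `(0, 1]`, and continuity extends this to `0`. -/

theorem eqOn_zero_of_hasDerivWithinAt_smul_left {E : Type*} [NormedAddCommGroup E]
    [NormedSpace ℝ E] {f : ℝ → E} {c : ℝ → ℝ} {a b K : ℝ}
    (hc : ∀ t ∈ Ioc a b, ‖c t‖ ≤ K) (hf : ContinuousOn f (Icc a b))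
    (hf' : ∀ t ∈ Ioc a b, HasDerivWithinAt f (c t • f t) (Iic t) t) (hb : f b = 0) :
    EqOn f 0 (Icc a b) := by
  have hlip : ∀ t ∈ Ioc a b, LipschitzOnWith K.toNNReal (fun x : E => c t • x) univ := by
    intro t ht
    refine LipschitzWith.lipschitzOnWith (LipschitzWith.of_dist_le_mul fun x y => ?_)
    rw [dist_smul₀, Real.coe_toNNReal _ ((norm_nonneg _).trans (hc t ht))]
    exact mul_le_mul_of_nonneg_right (hc t ht) dist_nonneg
  have hzero : ∀ t ∈ Ioc a b, HasDerivWithinAt (0 : ℝ → E) (c t • (0 : ℝ → E) t) (Iic t) t := by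
    intro t _
    rw [Pi.zero_apply, smul_zero]
    exact hasDerivWithinAt_const t (Iic t) 0
  exact ODE_solution_unique_of_mem_Icc_left hlip hf hf' (fun _ _ => mem_univ _)
    continuousOn_const hzero (fun _ _ => mem_univ _) hb

theorem two_mul_sq_div_sub_two_mul {s p : ℝ} (h : s ^ 3 - 2 * s ^ 2 + 2 * p ≠ 0) :
    2 * p ^ 2 / (s ^ 3 - 2 * s ^ 2 + 2 * p) - 2 * s
      = 2 * (p + s ^ 2 - 2 * s) / (s ^ 3 - 2 * s ^ 2 + 2 * p) * (p - s ^ 2) := by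
  rw [div_sub' h, div_mul_eq_mul_div]
  ring

theorem HasDerivWithinAt.sub_sq_of_riccati {P : ℝ → ℝ} {a b t : ℝ} (ht : t ∈ Ioc a b)
    (hD : t ^ 3 - 2 * t ^ 2 + 2 * P t ≠ 0)
    (hP : HasDerivWithinAt P (2 * P t ^ 2 / (t ^ 3 - 2 * t ^ 2 + 2 * P t)) (Ioc a b) t) :
    HasDerivWithinAt (fun s => P s - s ^ 2)
      (2 * (P t + t ^ 2 - 2 * t) / (t ^ 3 - 2 * t ^ 2 + 2 * P t) * (P t - t ^ 2)) (Iic t) t := by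
  have h := hP.sub (hasDerivAt_pow 2 t).hasDerivWithinAt
  rw [Nat.cast_ofNat, pow_one, two_mul_sq_div_sub_two_mul hD] at h
  exact h.mono_of_mem_nhdsWithin (Ioc_mem_nhdsLE_of_mem ht)

/-- Uniqueness in Example 6.1: any continuous `P : [0,1] → ℝ` which is differentiable on
`(0,1]` with `P'(s) = 2P(s)²/(s³ − 2s² + 2P(s))` (the denominator being nonzero there) and
`P(1) = 1` must equal `s²` on `[0,1]`. -/
theorem example61_riccati_solution_unique
    (P : ℝ → ℝ)
    (hPcont : ContinuousOn P (Set.Icc 0 1))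
    (hP1 : P 1 = 1)
    (hne : ∀ s ∈ Set.Ioc (0 : ℝ) 1, s ^ 3 - 2 * s ^ 2 + 2 * P s ≠ 0)
    (hderiv : ∀ s ∈ Set.Ioc (0 : ℝ) 1,
      HasDerivWithinAt P (2 * (P s) ^ 2 / (s ^ 3 - 2 * s ^ 2 + 2 * P s))
        (Set.Ioc 0 1) s) :
    ∀ s ∈ Set.Icc (0 : ℝ) 1, P s = s ^ 2 := by
  have hpos : EqOn P (· ^ 2) (Ioc 0 1) := by
    intro a ha
    have hsub : Icc a 1 ⊆ Ioc 0 1 := Icc_subset_Ioc ha.1 le_rfl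
    have hPa : ContinuousOn P (Icc a 1) := hPcont.mono (hsub.trans Ioc_subset_Icc_self)
    have hc : ContinuousOn (fun s => 2 * (P s + s ^ 2 - 2 * s) / (s ^ 3 - 2 * s ^ 2 + 2 * P s))
        (Icc a 1) :=
      ContinuousOn.div (by fun_prop) (by fun_prop) fun s hs => hne s (hsub hs)
    obtain ⟨K, hK⟩ := isCompact_Icc.exists_bound_of_continuousOn hc
    have hgap := eqOn_zero_of_hasDerivWithinAt_smul_left (f := fun s => P s - s ^ 2)
      (fun t ht => hK t (Ioc_subset_Icc_self ht)) (hPa.sub (by fun_prop))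
      (fun t ht =>
        have ht' := hsub (Ioc_subset_Icc_self ht)
        (hderiv t ht').sub_sq_of_riccati ht' (hne t ht'))
      (by simp [hP1])
    exact sub_eq_zero.mp (hgap ⟨le_rfl, ha.2⟩)
  exact hpos.of_subset_closure hPcont (by fun_prop) Ioc_subset_Icc_self
    (closure_Ioc zero_ne_one).ge
end

section
/- Define R : [0,1] → ℝ by R(s) = (s − 3/2)² + 3/4, and define P₁, P₂ : [0,1] → ℝ by P₁(s) = −1 and P₂(s) = s − 2. Then P₁ and P₂ are two distinct solutions of the terminal-value Riccati problem Ṗ(s) = (P(s)² + 2P(s) + 1)/(R(s) + P(s)), P(1) = −1; namely: (i) P₁(1) = P₂(1) = −1; (ii) for every s ∈ [0,1), R(s) + P₁(s) = (s−1)(s−2) > 0 and P₁'(s) = 0 = (P₁(s)² + 2P₁(s) + 1)/(R(s) + P₁(s)); (iii) for every s ∈ [0,1), R(s) + P₂(s) = (s−1)² > 0 and P₂'(s) = 1 = (P₂(s)² + 2P₂(s) + 1)/(R(s) + P₂(s)); (iv) moreover R(s) + P₁(s) ≥ 0 and R(s) + P₂(s) ≥ 0 for all s ∈ [0,1], and P₁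 ≠ P₂. In particular, the solution of this Riccati equation is not unique. -/
/-!
The right-hand side of the reduced Riccati equation is `(P + 1)² / (R + P)`. It vanishes along
`P ≡ -1`, and along `P(s) = s - 2` one has `R + P = (s - 1)² = (P + 1)²`, so it is identically `1`
wherever `s ≠ 1`.
-/

lemma riccati_rhs_eq_zero_of_eq_neg_one {p : ℝ} (r : ℝ) (hp : p = -1) :
    (p ^ 2 + 2 * p + 1) / (r + p) = 0 := by
  subst hp
  norm_num

lemma riccati_rhs_eq_one_of_add_eq_sq {p r : ℝ} (h : r + p = (p + 1) ^ 2) (hp : p + 1 ≠ 0) :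
    (p ^ 2 + 2 * p + 1) / (r + p) = 1 := by
  rw [h, div_eq_one_iff_eq (pow_ne_zero 2 hp)]
  ring

/-- Example 6.2: with `R(s) = (s − 3/2)² + 3/4`, both `P₁(s) = −1` and `P₂(s) = s − 2`
solve the terminal-value Riccati problem `P' = (P² + 2P + 1)/(R + P)`, `P(1) = −1`, with
`R + P ≥ 0` on `[0,1]`; in particular the solution of the Riccati equation is not
unique. -/
theorem example62_riccati_two_solutions
    (R P₁ P₂ : ℝ → ℝ)
    (hR : ∀ s, R s = (s - 3 / 2) ^ 2 + 3 / 4)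
    (hP₁ : ∀ s, P₁ s = -1)
    (hP₂ : ∀ s, P₂ s = s - 2) :
    -- (i) common terminal value
    (P₁ 1 = -1 ∧ P₂ 1 = -1) ∧
    -- (ii) P₁ solves the Riccati equation on [0,1)
    (∀ s ∈ Set.Ico (0 : ℝ) 1,
      R s + P₁ s = (s - 1) * (s - 2) ∧ 0 < (s - 1) * (s - 2) ∧
        HasDerivAt P₁ 0 s ∧
        (0 : ℝ) = ((P₁ s) ^ 2 + 2 * P₁ s + 1) / (R s + P₁ s)) ∧
    -- (iii) P₂ solves the Riccati equation on [0,1)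
    (∀ s ∈ Set.Ico (0 : ℝ) 1,
      R s + P₂ s = (s - 1) ^ 2 ∧ 0 < (s - 1) ^ 2 ∧
        HasDerivAt P₂ 1 s ∧
        (1 : ℝ) = ((P₂ s) ^ 2 + 2 * P₂ s + 1) / (R s + P₂ s)) ∧
    -- (iv) nonnegativity on [0,1] and the two solutions differ
    ((∀ s ∈ Set.Icc (0 : ℝ) 1, 0 ≤ R s + P₁ s ∧ 0 ≤ R s + P₂ s) ∧ P₁ ≠ P₂) := by
  obtain rfl : R = fun s => (s - 3 / 2) ^ 2 + 3 / 4 := funext hR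
  obtain rfl : P₁ = fun _ => -1 := funext hP₁
  obtain rfl : P₂ = fun s => s - 2 := funext hP₂
  have hRP₁ (s : ℝ) : (s - 3 / 2) ^ 2 + 3 / 4 + -1 = (s - 1) * (s - 2) := by ring
  have hRP₂ (s : ℝ) : (s - 3 / 2) ^ 2 + 3 / 4 + (s - 2) = (s - 1) ^ 2 := by ring
  refine ⟨⟨rfl, by norm_num⟩, fun s hs => ⟨hRP₁ s, ?_, hasDerivAt_const s _, ?_⟩,
    fun s hs => ⟨hRP₂ s, ?_, ?_, ?_⟩, ⟨fun s hs => ⟨?_, ?_⟩, ?_⟩⟩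
  · exact mul_pos_of_neg_of_neg (by linarith [hs.2]) (by linarith [hs.2])
  · exact (riccati_rhs_eq_zero_of_eq_neg_one _ rfl).symm
  · exact sq_pos_of_neg (by linarith [hs.2])
  · simpa using (hasDerivAt_id s).sub_const 2
  · refine (riccati_rhs_eq_one_of_add_eq_sq ?_ (by linarith [hs.2])).symm
    rw [hRP₂]
    ring
  · exact hRP₁ s ▸ mul_nonneg_of_nonpos_of_nonpos (by linarith [hs.2]) (by linarith [hs.2])
  · exact hRP₂ s ▸ sq_nonneg _
  · intro h
    have := congrFun h 0
    norm_num at this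
end
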